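/- (Frobenius) For every integer k ≥ 1, all roots of the Euler–Frobenius polynomial E_k are real, negative and distinct: there exist real numbers q_1 < q_2 < ⋯ < q_k < 0 such that E_k(x) = ∏_{j=1}^{k} (x − q_j). -/

import Mathlib

open Finset Polynomial

noncomputable section

/-- Euler's formula for the coefficients of the Euler–Frobenius polynomial `E_k`. -/
def efCoeff (k s : ℕ) : ℤ :=
  ∑ j ∈ Finset.range (s + 1),
    (-1) ^ j * ((k + 2).choose j : ℤ) * ((s + 1 - j : ℕ) : ℤ) ^ (k + 1)

/-- The Euler–Frobenius polynomial `E_k` as a real polynomial. -/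
def efPoly (k : ℕ) : Polynomial ℝ :=
  ∑ s ∈ Finset.range (k + 1), Polynomial.C ((efCoeff k s : ℝ)) * Polynomial.X ^ s

/-!
Euler's formula gives the recurrence `E_{k+1} = (1 + (k+1) X) E_k + X (1 - X) E_k'`.
If `E_k = ∏ (X - q_i)` with `q_0 < ⋯ < q_{k-1} < 0`, then `E_{k+1}(q_i) = q_i (1 - q_i) E_k'(q_i)`
has the sign of `(-1)^(k-i)`, while `E_{k+1}(0) = 1` and `E_{k+1}` has the sign of `(-1)^(k+1)`
near `-∞`. So `E_{k+1}` changes sign on each of the `k + 1` intervals cut out by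
`-∞ < q_0 < ⋯ < q_{k-1} < 0`, and the intermediate value theorem gives `k + 1` distinct negative
roots; these are all of them since `E_{k+1}` is monic of degree `k + 1`.
-/

lemma add_one_mul_choose_succ_sub_mul_choose (a b i : ℕ) :
    ((a : ℤ) + 1) * b.choose (i + 1) - ((b : ℤ) - a) * b.choose i
      = (b + 1).choose (i + 1) * ((a : ℤ) - i) := by
  have h₁ : ((b : ℤ) + 1) * b.choose i = (b + 1).choose (i + 1) * ((i : ℤ) + 1) := by
    exact_mod_cast Nat.add_one_mul_choose_eq b i
  have h₂ : ((b + 1).choose (i + 1) : ℤ) = b.choose i + b.choose (i + 1) := by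
    exact_mod_cast Nat.choose_succ_succ' b i
  linear_combination -h₁ - ((a : ℤ) + 1) * h₂

lemma mul_neg_of_neg_one_pow_mul_pos {R : Type*} [CommRing R] [LinearOrder R]
    [IsStrictOrderedRing R] {a b : R} {n : ℕ} (ha : 0 < (-1) ^ (n + 1) * a) (hb : 0 < (-1) ^ n * b) : a * b < 0 := by
  rcases neg_one_pow_eq_or R n with h | h <;> simp only [h, pow_succ] at ha hb <;> nlinarith

section IntermediateValue

variable {α : Type*} [ConditionallyCompleteLinearOrder α] [TopologicalSpace α] [OrderTopology α]
  [DenselyOrdered α]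

lemma exists_mem_Ioo_eq_zero_of_mul_neg {f : α → ℝ} {a b : α} (hab : a ≤ b)
    (hf : ContinuousOn f (Set.Icc a b)) (h : f a * f b < 0) : ∃ x ∈ Set.Ioo a b, f x = 0 := by
  rcases mul_neg_iff.1 h with ⟨ha, hb⟩ | ⟨ha, hb⟩
  · exact intermediate_value_Ioo' hab hf ⟨hb, ha⟩
  · exact intermediate_value_Ioo hab hf ⟨ha, hb⟩

lemma exists_strictMono_zeros_of_alternating {f : α → ℝ} (hf : Continuous f) {m : ℕ}
    {t : Fin (m + 1) → α} (ht : StrictMono t)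
    (halt : ∀ j : Fin m, f (t j.castSucc) * f (t j.succ) < 0) :
    ∃ r : Fin m → α, StrictMono r ∧ (∀ j, r j < t (Fin.last m)) ∧ ∀ j, f (r j) = 0 := by
  choose r hr hr0 using fun j => exists_mem_Ioo_eq_zero_of_mul_neg
    (ht.monotone (Fin.castSucc_le_succ j)) hf.continuousOn (halt j)
  refine ⟨r, fun i j hij => ?_, fun j => (hr j).2.trans_le (ht.monotone (Fin.le_last _)), hr0⟩
  calc r i < t i.succ := (hr i).2
    _ ≤ t j.castSucc := ht.monotone (Fin.succ_le_castSucc_iff.2 hij)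
    _ < r j := (hr j).1

end IntermediateValue

lemma Fin.strictMono_snoc {α : Type*} [Preorder α] {n : ℕ} {f : Fin n → α} {a : α} :
    StrictMono (Fin.snoc f a : Fin (n + 1) → α) ↔ (∀ j, f j < a) ∧ StrictMono f := by
  refine ⟨fun h => ⟨fun j => by simpa using h (Fin.castSucc_lt_last j),
    fun i j hij => by simpa using h (Fin.castSucc_lt_castSucc_iff.2 hij)⟩, ?_⟩
  rintro ⟨hlt, hf⟩ i j hij
  induction j using Fin.lastCases with
  | last =>
    induction i using Fin.lastCases with
    | last => exact absurd hij (lt_irrefl _)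
    | cast i => simpa using hlt i
  | cast j =>
    induction i using Fin.lastCases with
    | last => exact absurd hij (not_lt.2 (Fin.le_last _))
    | cast i => simpa using hf (Fin.castSucc_lt_castSucc_iff.1 hij)

namespace Polynomial

lemma coeff_X_mul_derivative {R : Type*} [Semiring R] (p : R[X]) (n : ℕ) :
    (X * derivative p).coeff n = n * p.coeff n := by
  cases n with
  | zero => simp
  | succ n => rw [coeff_X_mul, coeff_derivative, ← Nat.cast_succ, Nat.cast_comm]

lemma eventually_atBot_neg_one_pow_mul_eval_pos {P : ℝ[X]} (hdeg : 0 < P.natDegree)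
    (hlc : 0 < P.leadingCoeff) : ∀ᶠ x in Filter.atBot, 0 < (-1) ^ P.natDegree * P.eval x := by
  have hlead : Filter.Tendsto (fun x : ℝ => (-1) ^ P.natDegree * (P.leadingCoeff * x ^ P.natDegree))
      Filter.atBot Filter.atTop := by
    simp_rw [mul_left_comm, ← mul_pow, neg_one_mul]
    exact ((Filter.tendsto_pow_atTop hdeg.ne').comp Filter.tendsto_neg_atBot_atTop).const_mul_atTop
      hlc
  exact ((Asymptotics.IsEquivalent.refl.mul P.isEquivalent_atBot_lead).symm.tendsto_atTop
    hlead).eventually_gt_atTop 0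

lemma neg_one_pow_mul_eval_derivative_prod_X_sub_C_pos {k : ℕ} {q : Fin k → ℝ}
    (hq : StrictMono q) (i : Fin k) :
    0 < (-1) ^ (k - 1 - i) * (derivative (∏ j, (X - C (q j)))).eval (q i) := by
  classical
  have hsplit : univ.erase i = Iio i ∪ Ioi i := by
    ext j
    simp
  rw [← Lagrange.nodal_eq, Lagrange.eval_nodal_derivative_eval_node_eq (mem_univ i),
    Lagrange.eval_nodal, hsplit, prod_union (disjoint_left.2 fun j h₁ h₂ =>
      lt_asymm (mem_Iio.1 h₁) (mem_Ioi.1 h₂)), ← Fin.card_Ioi, ← prod_const, mul_left_comm,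
    ← prod_mul_distrib]
  refine mul_pos (prod_pos fun j hj => sub_pos.2 (hq (mem_Iio.1 hj)))
    (prod_pos fun j hj => ?_)
  linarith [hq (mem_Ioi.1 hj)]

lemma IsMonicOfDegree.eq_prod_X_sub_C {R : Type*} [CommRing R] [IsDomain R] {P : R[X]} {n : ℕ}
    (hP : IsMonicOfDegree P n) {r : Fin n → R} (hr : Function.Injective r)
    (h : ∀ j, P.eval (r j) = 0) : P = ∏ j, (X - C (r j)) := by
  rcases eq_or_ne n 0 with rfl | hn
  · simpa using (isMonicOfDegree_zero_iff).1 hP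
  have hQ : IsMonicOfDegree (Lagrange.nodal univ r) n :=
    (isMonicOfDegree_iff' _ _).2 ⟨by simp [Lagrange.natDegree_nodal], Lagrange.nodal_monic⟩
  refine sub_eq_zero.1 (eq_zero_of_natDegree_lt_card_of_eval_eq_zero _ hr (fun j => ?_) ?_)
  · rw [eval_sub, h, ← Lagrange.nodal_eq, Lagrange.eval_nodal_at_node (mem_univ j), sub_zero]
  · simpa [Lagrange.nodal_eq] using hP.natDegree_sub_lt hn hQ

end Polynomial

lemma efCoeff_eq_sum (k s : ℕ) : efCoeff k s =
    ∑ j ∈ range (s + 1), (-1) ^ j * ((k + 2).choose j : ℤ) * ((s : ℤ) + 1 - j) ^ (k + 1) := by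
  refine sum_congr rfl fun j hj => ?_
  rw [Nat.cast_sub (by grind)]
  push_cast
  ring

lemma efCoeff_succ_succ (k s : ℕ) :
    efCoeff (k + 1) (s + 1) =
      ((s : ℤ) + 2) * efCoeff k (s + 1) + ((k : ℤ) + 1 - s) * efCoeff k s := by
  simp only [efCoeff_eq_sum, sum_range_succ' _ (s + 1)]
  rw [mul_add, mul_sum, mul_sum, add_right_comm (∑ i ∈ range (s + 1), _), ← sum_add_distrib]
  congr 1
  · refine sum_congr rfl fun i _ => ?_
    have h := add_one_mul_choose_succ_sub_mul_choose (s + 1) (k + 2) i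
    push_cast at h ⊢
    linear_combination (-(-1) ^ (i + 1) * ((s : ℤ) + 1 - i) ^ (k + 1)) * h
  · push_cast [pow_zero, Nat.choose_zero_right]
    ring

lemma efCoeff_zero (k : ℕ) : efCoeff k 0 = 1 := by
  simp [efCoeff]

lemma efCoeff_zero_left_succ (s : ℕ) : efCoeff 0 (s + 1) = 0 := by
  have hwiden : efCoeff 0 (s + 1) =
      ∑ j ∈ range (s + 3), (-1) ^ j * ((2).choose j : ℤ) * ((s : ℤ) + 2 - j) := by
    rw [efCoeff_eq_sum, sum_range_succ _ (s + 2)]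
    push_cast
    simp only [sub_self, mul_zero, add_zero]
    exact sum_congr rfl fun j _ => by ring
  rw [hwiden, ← sum_subset (range_subset_range.2 (by omega : 3 ≤ s + 3)) fun j _ hj => by
    simp [Nat.choose_eq_zero_of_lt (by simp at hj; omega : 2 < j)]]
  simp only [sum_range_succ, sum_range_zero, Nat.choose_zero_right, Nat.choose_one_right,
    Nat.choose_self]
  push_cast
  ring

lemma efCoeff_eq_zero_of_lt {k s : ℕ} (h : k < s) : efCoeff k s = 0 := by
  induction k generalizing s with
  | zero =>
    obtain ⟨s, rfl⟩ := Nat.exists_eq_add_of_lt h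
    simpa using efCoeff_zero_left_succ s
  | succ k ih =>
    obtain ⟨s, rfl⟩ := Nat.exists_eq_add_of_lt h
    rw [efCoeff_succ_succ, ih (by omega), ih (by omega)]
    ring

lemma efCoeff_self (k : ℕ) : efCoeff k k = 1 := by
  induction k with
  | zero => simp [efCoeff]
  | succ k ih => rw [efCoeff_succ_succ, ih, efCoeff_eq_zero_of_lt k.lt_succ_self]; ring

lemma coeff_efPoly (k s : ℕ) : (efPoly k).coeff s = efCoeff k s := by
  rw [efPoly, finsetSum_coeff]
  simp only [coeff_C_mul_X_pow, sum_ite_eq, mem_range]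
  split_ifs with h
  · rfl
  · rw [efCoeff_eq_zero_of_lt (by omega), Int.cast_zero]

lemma isMonicOfDegree_efPoly (k : ℕ) : IsMonicOfDegree (efPoly k) k := by
  refine (isMonicOfDegree_iff _ _).2 ⟨natDegree_le_iff_coeff_eq_zero.2 fun s hs => ?_, ?_⟩
  · rw [coeff_efPoly, efCoeff_eq_zero_of_lt (by exact_mod_cast hs), Int.cast_zero]
  · rw [coeff_efPoly, efCoeff_self, Int.cast_one]

lemma eval_zero_efPoly (k : ℕ) : (efPoly k).eval 0 = 1 := by
  rw [← coeff_zero_eq_eval_zero, coeff_efPoly, efCoeff_zero, Int.cast_one]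

lemma efPoly_succ (k : ℕ) : efPoly (k + 1) =
    (1 + C ((k : ℝ) + 1) * X) * efPoly k + (1 - X) * (X * derivative (efPoly k)) := by
  ext (_ | s)
  · simp [coeff_efPoly, efCoeff_zero]
  · have h := congrArg (Int.cast : ℤ → ℝ) (efCoeff_succ_succ k s)
    simp only [add_mul, one_mul, sub_mul, coeff_add, coeff_sub, mul_assoc, coeff_C_mul]
    rw [coeff_X_mul_derivative, coeff_X_mul, coeff_X_mul, coeff_X_mul_derivative]
    simp only [coeff_efPoly]
    push_cast at h ⊢
    linear_combination h

section EulerFrobenius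

variable {k : ℕ} {q : Fin k → ℝ}

lemma neg_one_pow_mul_eval_efPoly_succ_pos (hq : StrictMono q) (hneg : ∀ j, q j < 0)
    (hE : efPoly k = ∏ j, (X - C (q j))) (i : Fin k) :
    0 < (-1) ^ (k - i) * (efPoly (k + 1)).eval (q i) := by
  have hroot : (efPoly k).eval (q i) = 0 := by
    rw [hE, eval_prod]
    exact prod_eq_zero (mem_univ i) (by simp)
  have hval :
      (efPoly (k + 1)).eval (q i) = q i * (1 - q i) * (derivative (efPoly k)).eval (q i) := by
    simp only [efPoly_succ, eval_add, eval_mul, eval_sub, eval_one, eval_X, hroot]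
    ring
  have hfac : q i * (1 - q i) < 0 := mul_neg_of_neg_of_pos (hneg i) (by linarith [hneg i])
  have hder := neg_one_pow_mul_eval_derivative_prod_X_sub_C_pos hq i
  rw [← hE] at hder
  calc 0 < -(q i * (1 - q i)) * ((-1) ^ (k - 1 - i) * (derivative (efPoly k)).eval (q i)) :=
        mul_pos (neg_pos.2 hfac) hder
    _ = (-1) ^ (k - i) * (efPoly (k + 1)).eval (q i) := by
        rw [hval, show k - i = k - 1 - i + 1 by omega, pow_succ]
        ring

lemma exists_efPoly_succ_eq_prod (hq : StrictMono q) (hneg : ∀ j, q j < 0)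
    (hE : efPoly k = ∏ j, (X - C (q j))) :
    ∃ r : Fin (k + 1) → ℝ, StrictMono r ∧ (∀ j, r j < 0) ∧
      efPoly (k + 1) = ∏ j, (X - C (r j)) := by
  have hmonic := isMonicOfDegree_efPoly (k + 1)
  obtain ⟨M, hMsign, hMq, hM0⟩ : ∃ M, 0 < (-1) ^ (k + 1) * (efPoly (k + 1)).eval M ∧
      (∀ j, M < q j) ∧ M < 0 := by
    have hM := eventually_atBot_neg_one_pow_mul_eval_pos (P := efPoly (k + 1))
      (by simp [hmonic.natDegree_eq]) (by simp [hmonic.leadingCoeff_eq])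
    rw [hmonic.natDegree_eq] at hM
    exact (hM.and ((Filter.eventually_all.2 fun j => Filter.eventually_lt_atBot (q j)).and
      (Filter.eventually_lt_atBot 0))).exists
  -- the nodes `M < q 0 < ⋯ < q (k - 1) < 0`
  set t : Fin (k + 2) → ℝ := Fin.cons M (Fin.snoc q 0)
  have ht : StrictMono t := Fin.strictMono_cons.2
    ⟨Fin.lastCases (by simpa using hM0) (by simpa using hMq), Fin.strictMono_snoc.2 ⟨hneg, hq⟩⟩
  have hsign (j : Fin (k + 2)) : 0 < (-1) ^ (k + 1 - j) * (efPoly (k + 1)).eval (t j) := by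
    induction j using Fin.cases with
    | zero => simpa [t] using hMsign
    | succ j =>
      induction j using Fin.lastCases with
      | last => simp [t, eval_zero_efPoly]
      | cast i => simpa [t] using neg_one_pow_mul_eval_efPoly_succ_pos hq hneg hE i
  have halt (j : Fin (k + 1)) :
      (efPoly (k + 1)).eval (t j.castSucc) * (efPoly (k + 1)).eval (t j.succ) < 0 := by
    have h := hsign j.castSucc
    rw [Fin.val_castSucc, show k + 1 - j = k - j + 1 by omega] at h
    exact mul_neg_of_neg_one_pow_mul_pos h (by simpa using hsign j.succ)
  obtain ⟨r, hr, hr0, hroot⟩ :=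
    exists_strictMono_zeros_of_alternating (efPoly (k + 1)).continuous ht halt
  exact ⟨r, hr, fun j => by simpa [t] using hr0 j,
    hmonic.eq_prod_X_sub_C hr.injective hroot⟩

end EulerFrobenius

theorem exists_strictMono_neg_efPoly_eq_prod (k : ℕ) :
    ∃ q : Fin k → ℝ, StrictMono q ∧ (∀ j, q j < 0) ∧ efPoly k = ∏ j, (X - C (q j)) := by
  induction k with
  | zero => exact ⟨Fin.elim0, fun i => i.elim0, fun i => i.elim0, by simp [efPoly, efCoeff]⟩
  | succ k ih =>
    obtain ⟨q, hq, hneg, hE⟩ := ih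
    exact exists_efPoly_succ_eq_prod hq hneg hE

/-- **Frobenius**: for `k ≥ 1` all roots of `E_k` are real, negative and distinct:
`E_k(x) = ∏_{j=1}^{k} (x − q_j)` with `q_1 < q_2 < ⋯ < q_k < 0`. -/
theorem efPoly_roots_real_neg_distinct :
    ∀ k : ℕ, 1 ≤ k → ∃ q : Fin k → ℝ, StrictMono q ∧ (∀ j, q j < 0) ∧
      efPoly k = ∏ j : Fin k, (Polynomial.X - Polynomial.C (q j)) :=
  fun k _ => exists_strictMono_neg_efPoly_eq_prod k
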